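/- arXiv:math/0611516 — 3 statements merged into one kernel-verified Lean document; each statement's English description precedes it below -/
import Mathlib

section
/- Let (X,d) be a complete metric space and f : X → [0,∞) continuous. Then for any x₀ ∈ X and ε₀ > 0 there exist x ∈ closure(B_{2ε₀}(x₀)) and ε ∈ (0, ε₀] such that f(x)·ε ≥ f(x₀)·ε₀ and f(y) ≤ 2f(x) for all y in the closed ball of radius ε around x. -/
/-!
If the conclusion failed, every admissible pair `(x, ε)` could be replaced by `(y, ε / 2)` with
`d(x, y) ≤ ε` and `f y > 2 f x`. Iterating gives a sequence whose steps are bounded by `ε₀ / 2 ^ n`,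
hence Cauchy, hence convergent, while the values of `f` at least double at every step; continuity
of `f` at the limit rules this out. The total displacement is below `ε₀ + ε₀ / 2 + ⋯ = 2 ε₀`,
which keeps all points inside `B_{2ε₀}(x₀)`.
-/

open Filter Topology Metric

theorem not_tendsto_of_mul_lt {a : ℕ → ℝ} {c : ℝ} (hc : 1 < c) (ha : ∀ n, 0 ≤ a n)
    (hlt : ∀ n, c * a n < a (n + 1)) (L : ℝ) : ¬ Tendsto a atTop (𝓝 L) := by
  intro hL
  have hmono : Monotone a := monotone_nat_of_le_succ fun n => by nlinarith [ha n, hlt n]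
  have hL_pos : 0 < L := by
    have := hlt 0
    nlinarith [ha 0, hmono.ge_of_tendsto hL 1]
  have hcL : c * L ≤ L :=
    le_of_tendsto_of_tendsto' (hL.const_mul c) ((tendsto_add_atTop_iff_nat 1).2 hL)
      fun n => (hlt n).le
  nlinarith

section Hofer

variable {X : Type*} [PseudoMetricSpace X] [CompleteSpace X] {f : X → ℝ}

theorem false_of_doubling_seq (hf : Continuous f) (hnonneg : ∀ x, 0 ≤ f x) (C : ℝ)
    (u : ℕ → X) (hdist : ∀ n, dist (u n) (u (n + 1)) ≤ C / 2 ^ n)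
    (hdouble : ∀ n, 2 * f (u n) < f (u (n + 1))) : False := by
  have hcauchy : CauchySeq u :=
    cauchySeq_of_le_geometric_two (C := 2 * C) fun n => by simpa using hdist n
  obtain ⟨y, hy⟩ := cauchySeq_tendsto_of_complete hcauchy
  exact not_tendsto_of_mul_lt one_lt_two (fun n => hnonneg (u n)) hdouble (f y)
    ((hf.tendsto y).comp hy)

theorem exists_forall_dist_le_imp_le_two_mul (hf : Continuous f) (hnonneg : ∀ x, 0 ≤ f x)
    (P : X → ℝ → Prop) {x₀ : X} {ε₀ : ℝ} (h₀ : P x₀ ε₀) :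
    ∃ x ε, P x ε ∧ ∀ y, dist x y ≤ ε → P y (ε / 2) → f y ≤ 2 * f x := by
  by_contra! H
  choose! next hnext using H
  let u : ℕ → X := fun n => Nat.rec x₀ (fun k x => next x (ε₀ / 2 ^ k)) n
  have hP : ∀ n, P (u n) (ε₀ / 2 ^ n) := by
    intro n
    induction n with
    | zero => simpa [u] using h₀
    | succ n ih => simpa [pow_succ, div_div] using (hnext _ _ ih).2.1
  exact false_of_doubling_seq hf hnonneg ε₀ u (fun n => (hnext _ _ (hP n)).1)
    fun n => (hnext _ _ (hP n)).2.2

theorem exists_mem_ball_forall_closedBall_le_two_mul (hf : Continuous f)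
    (hnonneg : ∀ x, 0 ≤ f x) (x₀ : X) {ε₀ : ℝ} (hε₀ : 0 < ε₀) :
    ∃ x ∈ ball x₀ (2 * ε₀), ∃ ε ∈ Set.Ioc 0 ε₀,
      f x₀ * ε₀ ≤ f x * ε ∧ ∀ y ∈ closedBall x ε, f y ≤ 2 * f x := by
  -- A step of size `ε` followed by halving `ε` leaves `dist x x₀ + 2 * ε` non-increasing.
  obtain ⟨x, ε, ⟨hε, hdist, hval⟩, hstuck⟩ := exists_forall_dist_le_imp_le_two_mul hf hnonneg
    (fun x ε => 0 < ε ∧ dist x x₀ ≤ 2 * (ε₀ - ε) ∧ f x₀ * ε₀ ≤ f x * ε)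
    (x₀ := x₀) ⟨hε₀, by simp, le_rfl⟩
  refine ⟨x, mem_ball.2 (by linarith), ε, ⟨hε, by linarith [dist_nonneg (x := x) (y := x₀)]⟩,
    hval, fun y hy => ?_⟩
  rw [mem_closedBall'] at hy
  by_contra! hlt
  refine (hstuck y hy ⟨half_pos hε, ?_, ?_⟩).not_gt hlt
  · linarith [dist_triangle_left y x₀ x]
  · nlinarith

end Hofer

/-- Hofer's lemma: Let (X,d) be a complete metric space and
f : X → [0,∞) continuous.  Then for any x₀ ∈ X and ε₀ > 0 there exist
x ∈ closure(B_{2ε₀}(x₀)) and ε ∈ (0, ε₀] such that f(x)·ε ≥ f(x₀)·ε₀ and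
f(y) ≤ 2 f(x) for all y in the closed ball of radius ε around x. -/
theorem stmt9 {X : Type*} [MetricSpace X] [CompleteSpace X]
    (f : X → ℝ) (hf : Continuous f) (hnonneg : ∀ x, 0 ≤ f x)
    (x₀ : X) (ε₀ : ℝ) (hε₀ : 0 < ε₀) :
    ∃ x ∈ closure (Metric.ball x₀ (2 * ε₀)), ∃ ε : ℝ, ε ∈ Set.Ioc 0 ε₀ ∧
      f x₀ * ε₀ ≤ f x * ε ∧ ∀ y ∈ Metric.closedBall x ε, f y ≤ 2 * f x := by
  obtain ⟨x, hx, ε, hε, hval, hbound⟩ :=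
    exists_mem_ball_forall_closedBall_le_two_mul hf hnonneg x₀ hε₀
  exact ⟨x, subset_closure hx, ε, hε, hval, hbound⟩
end

section
/- Suppose a smooth cylinder w_∞ : ℝ × S¹ → S³ has image disjoint from a link K and from a knot P_∞, is asymptotic as s → +∞ to an orbit P₊ and as s → −∞ to an orbit P₋, both disjoint from K and from each other's complement conditions, and there exist smooth maps (coming from the approximating sequence) realizing homologies showing lk(P_±, K_j) = lk(P_∞, K_j) for all components K_j, and lk(P_±, P_∞) = 0 whenever P_± is geometrically distinct from P_∞. Assume every closed orbit P ⊂ M \ P_∞ of the limiting Reeb field satisfies lk(P, P_∞) ≠ 0 unless P lies on the boundary torus L, where orbits P satisfy lk(P,P_∞) = 0 and lk(P,K) = −1·(meridian class). If lk(P_∞, K) = 1, then each orbit P_± is either P_∞ itself (simply covered) or a simply covered orbit contained in L. -/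
/-- Classification of the asymptotic limits P_± of the limit cylinder
in the degeneration argument (m = 1).  Orbits are abstracted with their linking
numbers lkK (with the transverse knot K) and lkP (with P_∞); lk(P_∞, K) = 1; every
closed orbit other than P_∞ not lying on the torus L is nontrivially linked with
P_∞; and the Morse–Bott orbits on L (negatively oriented meridians, traversed by the
Reeb flow) satisfy lk(·, K) = 1.  If P_± is the n-fold cover (n ≠ 0) of a simply
covered orbit P₀ with n·lk(P₀, K) = lk(P_∞, K) = 1 and n·lk(P₀, P_∞) = 0 whenever P₀
is geometrically distinct from P_∞, then P_± is either P_∞ itself (simply covered,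
n = 1) or a simply covered orbit contained in L. -/
theorem stmt15 (Orbit : Type*) (Pinf : Orbit) (onL : Orbit → Prop)
    (lkK lkP : Orbit → ℤ)
    (hPinfK : lkK Pinf = 1)
    (honL : ∀ P, onL P → lkK P = 1)
    (hlink : ∀ P, P ≠ Pinf → ¬ onL P → lkP P ≠ 0)
    (P₀ : Orbit) (n : ℤ) (hn : n ≠ 0)
    (h1 : n * lkK P₀ = 1)
    (h2 : P₀ ≠ Pinf → n * lkP P₀ = 0) :
    (P₀ = Pinf ∧ n = 1) ∨ (onL P₀ ∧ n = 1) := by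
  by_cases hp : P₀ = Pinf
  · left
    refine ⟨hp, ?_⟩
    rw [hp, hPinfK, mul_one] at h1
    exact h1
  · right
    have hol : onL P₀ := by
      by_contra hno
      have := hlink P₀ hp hno
      have := mul_eq_zero.mp (h2 hp)
      tauto
    refine ⟨hol, ?_⟩
    rw [honL P₀ hol, mul_one] at h1
    exact h1
end

section
/- Let M be an oriented 3-manifold with contact form λ, Reeb vector field X with globally defined flow, and admissible complex multiplication J on ξ = ker λ preserved by the Reeb flow. Let F : M → ℝ be smooth with dF(X) ≡ 0, and define λ' = λ − dF ∘ J ∘ π, where π : TM → ξ is the projection along X. Then: (a) λ'(X) ≡ 1; (b) the distribution ξ' = ker λ' is preserved by the Reeb flow of λ (equivalently dλ'(X,·) ≡ 0); (c) dλ is nondegenerate on ξ'; and (d) if Ψ : ℝ×M → ℝ×M is the diffeomorphism Ψ(a,m) = (a + F(m), m) and J̃ the almost complex structure associated to (λ, J), then Ψ_*J̃ preserves ξ' ⊂ T({0}×M), restricts there to the unique complex structure J' with J ∘ π|_{ξ'} = π ∘ J', and Ψ_*J̃ is the almost complex structure associated to the stable Hamiltonian structure (ξ', X, dλ, J'). 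-/
/-- fiberwise/linearized form of Prop. "wavy": V models the tangent
space T_mM; X is the Reeb vector, λ the contact form with λ(X) = 1 and ξ = ker λ,
B = dλ (with B(X,·) = 0, antisymmetric, nondegenerate on ξ), J the admissible complex
multiplication on ξ (extended via the projection π(v) = v − λ(v)X along X), and dF a
functional with dF(X) = 0.  Set λ' = λ − dF ∘ J ∘ π and ξ' = ker λ'.  Then:
(a) λ'(X) = 1;
(b) ξ' is preserved by the (linearized) Reeb flow φ — which fixes X and preserves λ,
    F and J∘π — equivalently dλ'(X,·) = 0;
(c) dλ = B is nondegenerate on ξ';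
(d) for Ψ(a,m) = (a + F(m), m), with TΨ(α,v) = (α + dF(v), v), the pushforward
    Ψ_*J̃ = TΨ ∘ J̃ ∘ TΨ⁻¹ of the almost complex structure J̃(α,v) = (−λ(v), αX + Jπv)
    sends ∂a = (1,0) to (0,X), preserves ξ' ⊂ {0} × V, and restricts there to the
    unique complex structure J' with J ∘ π = π ∘ J' on ξ'; i.e. Ψ_*J̃ is the almost
    complex structure associated to the stable Hamiltonian structure (ξ', X, dλ, J'). -/
theorem stmt17 (V : Type*) [AddCommGroup V] [Module ℝ V]
    (X : V) (lam dF : V →ₗ[ℝ] ℝ) (J : V →ₗ[ℝ] V) (B : V →ₗ[ℝ] V →ₗ[ℝ] ℝ)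
    (hlamX : lam X = 1) (hdFX : dF X = 0)
    (hJxi : ∀ v, lam v = 0 → lam (J v) = 0)
    (hJJ : ∀ v, lam v = 0 → J (J v) = -v)
    (hBX : ∀ v, B X v = 0) (hBalt : ∀ v w, B v w = -(B w v))
    (hBnd : ∀ v, lam v = 0 → v ≠ 0 → ∃ w, lam w = 0 ∧ B v w ≠ 0)
    (φ : ℝ → V →ₗ[ℝ] V)
    (hφX : ∀ t, φ t X = X) (hφlam : ∀ t v, lam (φ t v) = lam v)
    (hφF : ∀ t v, dF (φ t v) = dF v)
    (hφJ : ∀ t v, φ t (J (v - lam v • X)) = J (φ t v - lam (φ t v) • X)) :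
    let π : V → V := fun v => v - lam v • X
    let lam' : V → ℝ := fun v => lam v - dF (J (π v))
    let Jt : ℝ × V → ℝ × V := fun p => (-(lam p.2), p.1 • X + J (π p.2))
    let TΨ : ℝ × V → ℝ × V := fun p => (p.1 + dF p.2, p.2)
    let TΨinv : ℝ × V → ℝ × V := fun p => (p.1 - dF p.2, p.2)
    let PsiJ : ℝ × V → ℝ × V := fun p => TΨ (Jt (TΨinv p))
    (lam' X = 1) ∧
    (∀ t v, lam' (φ t v) = lam' v) ∧
    (∀ v, lam' v = 0 → v ≠ 0 → ∃ w, lam' w = 0 ∧ B v w ≠ 0) ∧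
    (PsiJ (1, 0) = (0, X)) ∧
    (∀ v, lam' v = 0 → (PsiJ (0, v)).1 = 0 ∧ lam' ((PsiJ (0, v)).2) = 0 ∧
      π ((PsiJ (0, v)).2) = J (π v)) := by
  intro π lam' Jt TΨ TΨinv PsiJ
  refine ⟨?_, ?_, ?_, ?_, ?_⟩
  · show lam X - dF (J (X - lam X • X)) = 1
    rw [hlamX, one_smul, sub_self, map_zero, map_zero, sub_zero]
  · intro t v
    show lam (φ t v) - dF (J (φ t v - lam (φ t v) • X)) =
      lam v - dF (J (v - lam v • X))
    rw [← hφJ t v, hφF, hφlam]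
  · intro v hv hv0
    have hv' : lam v - dF (J (v - lam v • X)) = 0 := hv
    have hvh : v - lam v • X ≠ 0 := by
      intro h
      have hv2 : v = lam v • X := by rwa [sub_eq_zero] at h
      rw [h, map_zero, map_zero, sub_zero] at hv'
      exact hv0 (by rw [hv2, hv', zero_smul])
    have hvhl : lam (v - lam v • X) = 0 := by
      rw [map_sub, map_smul, hlamX, smul_eq_mul, mul_one, sub_self]
    obtain ⟨w, hw, hBw⟩ := hBnd (v - lam v • X) hvhl hvh
    refine ⟨w + (-(lam w - dF (J (w - lam w • X)))) • X, ?_, ?_⟩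
    · show lam (w + (-(lam w - dF (J (w - lam w • X)))) • X) -
        dF (J ((w + (-(lam w - dF (J (w - lam w • X)))) • X) -
          lam (w + (-(lam w - dF (J (w - lam w • X)))) • X) • X)) = 0
      have e1 : (w + (-(lam w - dF (J (w - lam w • X)))) • X) -
          lam (w + (-(lam w - dF (J (w - lam w • X)))) • X) • X = w - lam w • X := by
        rw [map_add, map_smul, hlamX, smul_eq_mul, mul_one]
        module
      rw [e1, map_add, map_smul, hlamX, smul_eq_mul, mul_one]
      ring
    · have hBvX : B v X = 0 := by rw [hBalt, hBX, neg_zero]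
      have e2 : B v (w + (-(lam w - dF (J (w - lam w • X)))) • X) = B v w := by
        rw [map_add, map_smul, hBvX, smul_zero, add_zero]
      have e3 : B (v - lam v • X) w = B v w := by
        rw [map_sub, map_smul, LinearMap.sub_apply, LinearMap.smul_apply, hBX,
          smul_zero, sub_zero]
      rw [e2, ← e3]
      exact hBw
  · show TΨ (Jt (TΨinv (1, 0))) = (0, X)
    simp [TΨ, Jt, TΨinv, π, hdFX, hlamX]
  · intro v hv
    have hv' : lam v - dF (J (v - lam v • X)) = 0 := hv
    have hvhl : lam (v - lam v • X) = 0 := by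
      rw [map_sub, map_smul, hlamX, smul_eq_mul, mul_one, sub_self]
    have hJv : lam (J (v - lam v • X)) = 0 := hJxi _ hvhl
    have hlamw : lam ((0 - dF v) • X + J (v - lam v • X)) = 0 - dF v := by
      rw [map_add, map_smul, hlamX, hJv, add_zero, smul_eq_mul, mul_one]
    have hπw : ((0 - dF v) • X + J (v - lam v • X)) -
        lam ((0 - dF v) • X + J (v - lam v • X)) • X = J (v - lam v • X) := by
      rw [hlamw]; module
    refine ⟨?_, ?_, ?_⟩
    · show -lam v + dF ((0 - dF v) • X + J (v - lam v • X)) = 0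
      rw [map_add, map_smul, hdFX, smul_zero, zero_add]
      linarith
    · show lam ((0 - dF v) • X + J (v - lam v • X)) -
        dF (J (((0 - dF v) • X + J (v - lam v • X)) -
          lam ((0 - dF v) • X + J (v - lam v • X)) • X)) = 0
      rw [hπw, hJJ _ hvhl, map_neg, hlamw, map_sub, map_smul, hdFX, smul_zero,
        sub_zero]
      ring
    · show ((0 - dF v) • X + J (v - lam v • X)) -
        lam ((0 - dF v) • X + J (v - lam v • X)) • X = J (v - lam v • X)
      exact hπw
end
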